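/- A function f : [n] → [m] is quasi-monotonic if and only if it factors as f = d_α ∘ u_β for some multi-index β of dimension ≤ n with |β| = n − j and some multi-index α of dimension ≤ m with |α| = m − j, where u_β : [n] → [j] and d_α : [j] → [m] for some 0 ≤ j ≤ min(n, m). -/

import Mathlib

/-- The elementary coface `d_i^{(n+1)} : [n] → [n+1]` (monotonic injection omitting `i`):
`k ↦ k` for `k < i` and `k ↦ k+1` for `k ≥ i`. -/
def dMap (n i : ℕ) : Fin (n + 1) → Fin (n + 2) :=
  fun k => if (k : ℕ) < i then ⟨k, by omega⟩ else ⟨(k : ℕ) + 1, by omega⟩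

/-- The elementary quasi-codegeneracy `u_i^{(n)} : [n+1] → [n]`:
`u_i 0 = u_i i = 0`, `u_i k = k` for `1 ≤ k ≤ i-1`, and `u_i k = k-1` for `k > i`. -/
def uMap (n i : ℕ) : Fin (n + 2) → Fin (n + 1) :=
  fun k => if (k : ℕ) = 0 ∨ (k : ℕ) = i then 0
    else if h : (k : ℕ) < i ∧ (k : ℕ) < n + 1 then ⟨k, h.2⟩
    else ⟨(k : ℕ) - 1, by omega⟩

/-- A function `f : [n] → [m]` is quasi-monotonic if `f 0 = 0` and `f` is strictly
monotonic outside the preimage of `0`. -/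
def QuasiMonotonic {n m : ℕ} (f : Fin (n + 1) → Fin (m + 1)) : Prop :=
  f 0 = 0 ∧ ∀ p q : Fin (n + 1), p < q → f p ≠ 0 → f q ≠ 0 → f p < f q

/-- A multi-index of dimension `≤ n`: a strictly increasing sequence of indices
`i_1 < … < i_k` with `1 ≤ i_p ≤ n` for all `p` (its length is `α.length`). -/
def IsMultiIndex (n : ℕ) (α : List ℕ) : Prop :=
  List.Chain' (· < ·) α ∧ ∀ i ∈ α, 1 ≤ i ∧ i ≤ n

/-- The quasi-codegeneracy `u_α = u_{i_1} ∘ u_{i_2} ∘ ⋯ ∘ u_{i_k} : [n] → [n-k]`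
associated to a multi-index `α = (i_1, …, i_k)`; each elementary factor is taken at the
appropriate dimension (`u_{i_k}` is applied first, at the highest dimension). -/
def uComp (n : ℕ) : (α : List ℕ) → α.length ≤ n → Fin (n + 1) → Fin (n - α.length + 1)
  | [], _ => fun k => k
  | i :: rest, h => fun k =>
      Fin.cast (by simp only [List.length_cons] at h ⊢; omega)
        (uMap (n - rest.length - 1) i
          (Fin.cast (by simp only [List.length_cons] at h; omega)
            (uComp n rest (by simp only [List.length_cons] at h; omega) k)))

/-- The coface `d_α = d_{i_k} ∘ d_{i_{k-1}} ∘ ⋯ ∘ d_{i_1} : [n-k] → [n]`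
associated to a multi-index `α = (i_1, …, i_k)`; each elementary factor is taken at the
appropriate dimension (`d_{i_1}` is applied first, at the lowest dimension). -/
def dComp (n : ℕ) : (α : List ℕ) → α.length ≤ n → Fin (n - α.length + 1) → Fin (n + 1)
  | [], _ => fun k => k
  | i :: rest, h => fun k =>
      dComp n rest (by simp only [List.length_cons] at h; omega)
        (Fin.cast (by simp only [List.length_cons] at h; omega)
          (dMap (n - rest.length - 1) i
            (Fin.cast (by simp only [List.length_cons] at h ⊢; omega) k)))

/-!
A quasi-monotonic map is determined by its zero set and its image: at the first point `x`
where two such maps `f`, `g` differ, say `f x < g x`, the value `f x` is taken by `g` at some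
point `x'`, and `x' < x` contradicts the injectivity of `f` off its zeros while `x' > x`
contradicts the monotonicity of `g`. Each `u_i` (`i ≥ 1`) is a quasi-monotonic surjection
vanishing exactly at `0` and `i`, and each `d_i` is a strictly monotone injection missing `i`;
since a multi-index is increasing, `u_β` and `d_α` fix everything below their first index, so
by induction `d_α ∘ u_β` is quasi-monotonic, vanishes exactly on `{0} ∪ β` and has image the
complement of `α`. For a quasi-monotonic `f` we therefore take for `β` the nonzero zeros of `f`
and for `α` the values it misses; `|β| = n - j` and `|α| = m - j` with `j` the number of
points where `f` does not vanish, because `f` is injective there.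
-/

open Finset

namespace QuasiMonotonic

variable {n m k : ℕ} {f : Fin (n + 1) → Fin (m + 1)}

theorem comp {g : Fin (m + 1) → Fin (k + 1)} (hg : QuasiMonotonic g) (hf : QuasiMonotonic f) :
    QuasiMonotonic (g ∘ f) := by
  refine ⟨by simp [hf.1, hg.1], fun p q hpq hp hq => hg.2 _ _ (hf.2 p q hpq ?_ ?_) hp hq⟩
  · rintro h0; simp [h0, hg.1] at hp
  · rintro h0; simp [h0, hg.1] at hq

theorem eq_of_apply_eq (hf : QuasiMonotonic f) {p q : Fin (n + 1)} (hp : f p ≠ 0)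
    (h : f p = f q) : p = q := by
  have hq : f q ≠ 0 := h ▸ hp
  rcases lt_trichotomy p q with hpq | hpq | hpq
  · exact absurd h (hf.2 p q hpq hp hq).ne
  · exact hpq
  · exact absurd h (hf.2 q p hpq hq hp).ne'

theorem not_lt_of_eqOn_Iio {g : Fin (n + 1) → Fin (m + 1)} (hf : QuasiMonotonic f)
    (hg : QuasiMonotonic g) (hr : Set.range f ⊆ Set.range g) {x : Fin (n + 1)} (hx : f x ≠ 0)
    (heq : ∀ x' < x, f x' = g x') : ¬ f x < g x := by
  intro hlt
  obtain ⟨x', hx'⟩ := hr ⟨x, rfl⟩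
  rcases lt_trichotomy x' x with h | rfl | h
  · have hfx' : f x' = f x := (heq x' h).trans hx'
    exact h.ne (hf.eq_of_apply_eq (by rwa [hfx']) hfx')
  · exact hlt.ne hx'.symm
  · exact lt_asymm hlt (hx' ▸ hg.2 x x' h (ne_bot_of_gt hlt) (hx' ▸ hx))

theorem eq_of_range_eq {g : Fin (n + 1) → Fin (m + 1)} (hf : QuasiMonotonic f)
    (hg : QuasiMonotonic g) (hz : ∀ x, f x = 0 ↔ g x = 0) (hr : Set.range f = Set.range g) :
    f = g := by
  funext x
  induction x using WellFoundedLT.induction with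
  | _ x ih =>
    by_cases hfx : f x = 0
    · rw [hfx, (hz x).1 hfx]
    · have hgx : g x ≠ 0 := fun h => hfx ((hz x).2 h)
      exact le_antisymm
        (not_lt.1 (hg.not_lt_of_eqOn_Iio hf hr.ge hgx fun y hy => (ih y hy).symm))
        (not_lt.1 (hf.not_lt_of_eqOn_Iio hg hr.le hfx ih))

theorem card_image (hf : QuasiMonotonic f) : #(univ.image f) = #{x | f x ≠ 0} + 1 := by
  have himage : univ.image f = insert 0 (({x | f x ≠ 0} : Finset _).image f) := by
    ext y
    simp only [mem_image, mem_univ, true_and, mem_insert, mem_filter]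
    constructor
    · rintro ⟨x, rfl⟩
      by_cases h : f x = 0
      exacts [Or.inl h, Or.inr ⟨x, h, rfl⟩]
    · rintro (rfl | ⟨x, -, rfl⟩)
      exacts [⟨0, hf.1⟩, ⟨x, rfl⟩]
  rw [himage, card_insert_of_notMem (by simp), card_image_of_injOn]
  intro p hp q _ hpq
  exact hf.eq_of_apply_eq (by simpa using hp) hpq

theorem card_compl_image_add (hf : QuasiMonotonic f) :
    #(univ.image f)ᶜ + #{x | f x ≠ 0} = m := by
  have := card_le_univ (univ.image f)
  rw [card_compl, Fintype.card_fin, hf.card_image] at *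
  omega

end QuasiMonotonic

theorem card_erase_zeros_add {n m : ℕ} {f : Fin (n + 1) → Fin (m + 1)} (h0 : f 0 = 0) :
    #(({x | f x = 0} : Finset _).erase 0) + #{x | f x ≠ 0} = n := by
  have h1 : #{x | f x = 0} + #{x | f x ≠ 0} = n + 1 := by
    rw [card_filter_add_card_filter_not, card_univ, Fintype.card_fin]
  have h2 := card_erase_add_one (s := {x | f x = 0}) (a := 0) (by simp [h0])
  omega

theorem StrictMono.quasiMonotonic {n m : ℕ} {f : Fin (n + 1) → Fin (m + 1)} (hf : StrictMono f)
    (h0 : f 0 = 0) : QuasiMonotonic f :=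
  ⟨h0, fun _ _ hpq _ _ => hf hpq⟩

theorem quasiMonotonic_cast {n m : ℕ} (h : n + 1 = m + 1) : QuasiMonotonic (Fin.cast h) :=
  (Fin.cast_strictMono h).quasiMonotonic rfl

section Elementary

variable {n i : ℕ}

theorem uMap_val (hi : i ≤ n + 1) (k : Fin (n + 2)) :
    (uMap n i k : ℕ) =
      if (k : ℕ) = 0 ∨ (k : ℕ) = i then 0
      else if (k : ℕ) < i then (k : ℕ) else (k : ℕ) - 1 := by
  unfold uMap
  split_ifs <;> first | rfl | omega

theorem uMap_val_eq_zero_iff (hi1 : 1 ≤ i) (hi : i ≤ n + 1) (k : Fin (n + 2)) :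
    (uMap n i k : ℕ) = 0 ↔ (k : ℕ) = 0 ∨ (k : ℕ) = i := by
  rw [uMap_val hi]
  split_ifs <;> omega

theorem uMap_quasiMonotonic (hi : i ≤ n + 1) : QuasiMonotonic (uMap n i) := by
  refine ⟨Fin.ext (by rw [uMap_val hi]; simp), fun p q hpq hp hq => ?_⟩
  rw [Ne, Fin.ext_iff, uMap_val hi, Fin.val_zero] at hp hq
  rw [Fin.lt_def, uMap_val hi, uMap_val hi]
  rw [Fin.lt_def] at hpq
  split_ifs at hp hq ⊢ <;> omega

theorem uMap_surjective (hi : i ≤ n + 1) : Function.Surjective (uMap n i) := by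
  intro k
  by_cases hk : (k : ℕ) = 0
  · exact ⟨0, Fin.ext (by rw [uMap_val hi]; simp [hk])⟩
  by_cases hki : (k : ℕ) < i
  · exact ⟨⟨k, by omega⟩, Fin.ext (by rw [uMap_val hi]; split_ifs <;> simp_all)⟩
  · refine ⟨⟨k + 1, by omega⟩, Fin.ext ?_⟩
    rw [uMap_val hi]
    split_ifs <;> simp_all <;> omega

theorem dMap_val (k : Fin (n + 1)) :
    (dMap n i k : ℕ) = if (k : ℕ) < i then (k : ℕ) else (k : ℕ) + 1 := by
  unfold dMap
  split_ifs <;> rfl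

theorem dMap_strictMono : StrictMono (dMap n i) := by
  intro p q hpq
  rw [Fin.lt_def] at hpq ⊢
  rw [dMap_val, dMap_val]
  split_ifs <;> omega

theorem dMap_mem_range_iff (hi : i ≤ n + 1) (y : Fin (n + 2)) :
    y ∈ Set.range (dMap n i) ↔ (y : ℕ) ≠ i := by
  constructor
  · rintro ⟨k, rfl⟩
    rw [dMap_val]
    split_ifs <;> omega
  · intro hy
    by_cases hyi : (y : ℕ) < i
    · exact ⟨⟨y, by omega⟩, Fin.ext (by rw [dMap_val]; simp [hyi])⟩
    · refine ⟨⟨y - 1, by omega⟩, Fin.ext ?_⟩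
      rw [dMap_val]
      dsimp only
      split_ifs <;> omega

end Elementary

namespace IsMultiIndex

variable {n i : ℕ} {l : List ℕ}

theorem pairwise (h : IsMultiIndex n l) : l.Pairwise (· < ·) :=
  List.isChain_iff_pairwise.mp h.1

theorem of_cons (h : IsMultiIndex n (i :: l)) : IsMultiIndex n l :=
  ⟨h.1.tail, fun b hb => h.2 b (List.mem_cons_of_mem i hb)⟩

theorem head_lt (h : IsMultiIndex n (i :: l)) : ∀ b ∈ l, i < b :=
  (List.pairwise_cons.mp h.pairwise).1

theorem one_le_head (h : IsMultiIndex n (i :: l)) : 1 ≤ i :=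
  (h.2 i List.mem_cons_self).1

theorem length_le_sub (h : IsMultiIndex n l) {k : ℕ} (hk : ∀ b ∈ l, k < b) :
    l.length ≤ n - k := by
  have hnodup : l.Nodup := h.pairwise.imp ne_of_lt
  have hsub : l.toFinset ⊆ Ioc k n := fun b hb => by
    rw [List.mem_toFinset] at hb
    exact mem_Ioc.mpr ⟨hk b hb, (h.2 b hb).2⟩
  simpa [List.toFinset_card_of_nodup hnodup] using card_le_card hsub

theorem length_le (h : IsMultiIndex n l) : l.length ≤ n := by
  simpa using h.length_le_sub (k := 0) fun b hb => (h.2 b hb).1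

theorem head_add_length_le (h : IsMultiIndex n (i :: l)) : i + l.length ≤ n := by
  have := h.of_cons.length_le_sub h.head_lt
  have := (h.2 i List.mem_cons_self).2
  omega

end IsMultiIndex

section uComp

variable {n : ℕ} {β : List ℕ}

theorem uComp_cons {i : ℕ} {rest : List ℕ} (hl : (i :: rest).length ≤ n) :
    uComp n (i :: rest) hl =
      Fin.cast (by simp at hl ⊢; omega) ∘ uMap (n - rest.length - 1) i ∘
        Fin.cast (by simp at hl; omega) ∘ uComp n rest (by simp at hl; omega) :=
  rfl

theorem uComp_quasiMonotonic (hβ : IsMultiIndex n β) (hl : β.length ≤ n) :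
    QuasiMonotonic (uComp n β hl) := by
  induction β with
  | nil => exact StrictMono.quasiMonotonic strictMono_id rfl
  | cons i rest ih =>
    have hi := hβ.head_add_length_le
    rw [uComp_cons]
    exact (quasiMonotonic_cast _).comp ((uMap_quasiMonotonic (by omega)).comp
      ((quasiMonotonic_cast _).comp (ih hβ.of_cons _)))

theorem uComp_surjective (hβ : IsMultiIndex n β) (hl : β.length ≤ n) :
    Function.Surjective (uComp n β hl) := by
  induction β with
  | nil => exact Function.surjective_id
  | cons i rest ih =>
    have hlen : (i :: rest).length = rest.length + 1 := rfl
    have hi := hβ.head_add_length_le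
    rw [uComp_cons]
    refine .comp ?_ ((uMap_surjective (n := n - rest.length - 1) (by omega)).comp
      (.comp ?_ (ih hβ.of_cons _))) <;>
    exact fun k => ⟨Fin.cast (by omega) k, rfl⟩

theorem uComp_val_of_forall_lt (hβ : IsMultiIndex n β) (hl : β.length ≤ n)
    {x : Fin (n + 1)} (hx : ∀ b ∈ β, (x : ℕ) < b) : (uComp n β hl x : ℕ) = x := by
  induction β with
  | nil => rfl
  | cons i rest ih =>
    have hi := hβ.head_add_length_le
    have hxi : (x : ℕ) < i := hx i List.mem_cons_self
    rw [uComp_cons]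
    simp only [Function.comp_apply, Fin.val_cast]
    rw [uMap_val (by omega), Fin.val_cast,
      ih hβ.of_cons _ fun b hb => hx b (List.mem_cons_of_mem i hb)]
    split_ifs <;> omega

theorem uComp_eq_zero_iff (hβ : IsMultiIndex n β) (hl : β.length ≤ n) (x : Fin (n + 1)) :
    uComp n β hl x = 0 ↔ x = 0 ∨ (x : ℕ) ∈ β := by
  induction β with
  | nil => simp [uComp]
  | cons i rest ih =>
    have hi := hβ.head_add_length_le
    have hrest := hβ.of_cons
    set u := uComp n rest hrest.length_le
    have hu_i : (u x : ℕ) = i ↔ (x : ℕ) = i := by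
      have hfix : (u ⟨i, by omega⟩ : ℕ) = i := uComp_val_of_forall_lt hrest _ hβ.head_lt
      refine ⟨fun h => ?_, fun h => by rw [show x = ⟨i, by omega⟩ from Fin.ext h, hfix]⟩
      have hux : u x ≠ 0 := fun h0 => by
        have := hβ.one_le_head
        rw [h0, Fin.val_zero] at h
        omega
      rw [(uComp_quasiMonotonic hrest _).eq_of_apply_eq hux (Fin.ext (h.trans hfix.symm))]
    rw [← Fin.val_eq_zero_iff, uComp_cons]
    simp only [Function.comp_apply, Fin.val_cast]
    rw [uMap_val_eq_zero_iff hβ.one_le_head (by omega), Fin.val_cast, Fin.val_eq_zero_iff,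
      ih hrest, hu_i, List.mem_cons]
    tauto

end uComp

section dComp

variable {m : ℕ} {α : List ℕ}

theorem dComp_cons {i : ℕ} {rest : List ℕ} (hl : (i :: rest).length ≤ m) :
    dComp m (i :: rest) hl =
      dComp m rest (by simp at hl; omega) ∘ Fin.cast (by simp at hl; omega) ∘
        dMap (m - rest.length - 1) i ∘ Fin.cast (by simp at hl ⊢; omega) :=
  rfl

theorem dComp_strictMono (α : List ℕ) (hl : α.length ≤ m) : StrictMono (dComp m α hl) := by
  induction α with
  | nil => exact strictMono_id
  | cons i rest ih =>
    rw [dComp_cons]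
    exact (ih _).comp ((Fin.cast_strictMono _).comp (dMap_strictMono.comp (Fin.cast_strictMono _)))

theorem dComp_val_of_forall_lt (α : List ℕ) (hl : α.length ≤ m) {k : Fin (m - α.length + 1)}
    (hk : ∀ a ∈ α, (k : ℕ) < a) : (dComp m α hl k : ℕ) = k := by
  induction α with
  | nil => rfl
  | cons i rest ih =>
    have hki : (k : ℕ) < i := hk i List.mem_cons_self
    rw [dComp_cons, Function.comp_apply, ih]
    all_goals simp only [Function.comp_apply, Fin.val_cast, dMap_val, if_pos hki]
    exact fun a ha => hk a (List.mem_cons_of_mem i ha)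

theorem dComp_quasiMonotonic (hα : IsMultiIndex m α) (hl : α.length ≤ m) :
    QuasiMonotonic (dComp m α hl) :=
  (dComp_strictMono α hl).quasiMonotonic
    (Fin.ext (dComp_val_of_forall_lt α hl fun a ha => (hα.2 a ha).1))

theorem dComp_mem_range_iff (hα : IsMultiIndex m α) (hl : α.length ≤ m) (y : Fin (m + 1)) :
    y ∈ Set.range (dComp m α hl) ↔ (y : ℕ) ∉ α := by
  induction α generalizing y with
  | nil => simpa using ⟨y, rfl⟩
  | cons i rest ih =>
    have hlen : (i :: rest).length = rest.length + 1 := rfl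
    have hi := hα.head_add_length_le
    have hrest := hα.of_cons
    set D := dComp m rest hrest.length_le
    have hfix : (D ⟨i, by omega⟩ : ℕ) = i := dComp_val_of_forall_lt _ _ hα.head_lt
    have hD_i : ∀ k, (D k : ℕ) = i ↔ (k : ℕ) = i := fun k =>
      ⟨fun h => by rw [(dComp_strictMono _ _).injective (Fin.ext (h.trans hfix.symm))],
        fun h => by rw [show k = ⟨i, by omega⟩ from Fin.ext h, hfix]⟩
    rw [List.mem_cons, not_or, ← ih hrest hrest.length_le]
    constructor
    · rintro ⟨k, rfl⟩
      rw [dComp_cons, Function.comp_apply, hD_i]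
      exact ⟨(dMap_mem_range_iff (by omega) _).1 ⟨_, rfl⟩, _, rfl⟩
    · rintro ⟨hyi, k, rfl⟩
      rw [hD_i] at hyi
      obtain ⟨k', hk'⟩ := (dMap_mem_range_iff (n := m - rest.length - 1) (by omega)
        (Fin.cast (by omega) k)).2 hyi
      exact ⟨Fin.cast (by omega) k', by rw [dComp_cons]; simp [hk']⟩

end dComp

section Factorization

variable {n m : ℕ} {β α : List ℕ}

theorem dComp_cast_uComp_quasiMonotonic (hβ : IsMultiIndex n β) (hα : IsMultiIndex m α)
    (hβl : β.length ≤ n) (hαl : α.length ≤ m) (hc : n - β.length + 1 = m - α.length + 1) :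
    QuasiMonotonic fun x => dComp m α hαl (Fin.cast hc (uComp n β hβl x)) :=
  (dComp_quasiMonotonic hα hαl).comp
    ((quasiMonotonic_cast hc).comp (uComp_quasiMonotonic hβ hβl))

theorem dComp_cast_uComp_eq_zero_iff (hβ : IsMultiIndex n β) (hα : IsMultiIndex m α)
    (hβl : β.length ≤ n) (hαl : α.length ≤ m) (hc : n - β.length + 1 = m - α.length + 1)
    (x : Fin (n + 1)) :
    dComp m α hαl (Fin.cast hc (uComp n β hβl x)) = 0 ↔ x = 0 ∨ (x : ℕ) ∈ β := by
  rw [← (dComp_quasiMonotonic hα hαl).1, (dComp_strictMono α hαl).injective.eq_iff,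
    Fin.cast_eq_zero, uComp_eq_zero_iff hβ hβl]

theorem mem_range_dComp_cast_uComp_iff (hβ : IsMultiIndex n β) (hα : IsMultiIndex m α)
    (hβl : β.length ≤ n) (hαl : α.length ≤ m) (hc : n - β.length + 1 = m - α.length + 1)
    (y : Fin (m + 1)) :
    y ∈ Set.range (fun x => dComp m α hαl (Fin.cast hc (uComp n β hβl x))) ↔
      (y : ℕ) ∉ α := by
  have hsurj : Function.Surjective (Fin.cast hc ∘ uComp n β hβl) :=
    Function.Surjective.comp (fun k => ⟨Fin.cast hc.symm k, rfl⟩) (uComp_surjective hβ hβl)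
  rw [← dComp_mem_range_iff hα hαl, ← hsurj.range_comp]
  rfl

end Factorization

def sortedVals {k : ℕ} (s : Finset (Fin (k + 1))) : List ℕ :=
  (s.map Fin.valEmbedding).sort

theorem val_mem_sortedVals {k : ℕ} {s : Finset (Fin (k + 1))} {x : Fin (k + 1)} :
    (x : ℕ) ∈ sortedVals s ↔ x ∈ s := by
  rw [sortedVals, mem_sort]
  exact mem_map' Fin.valEmbedding

theorem length_sortedVals {k : ℕ} (s : Finset (Fin (k + 1))) : (sortedVals s).length = #s := by
  rw [sortedVals, length_sort, card_map]

theorem isMultiIndex_sortedVals {k : ℕ} {s : Finset (Fin (k + 1))} (h0 : 0 ∉ s) :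
    IsMultiIndex k (sortedVals s) := by
  refine ⟨List.sortedLT_iff_isChain.mp (sortedLT_sort _), fun i hi => ?_⟩
  rw [sortedVals, mem_sort, mem_map] at hi
  obtain ⟨x, hx, rfl⟩ := hi
  have : x ≠ 0 := fun h => h0 (h ▸ hx)
  exact ⟨Nat.one_le_iff_ne_zero.mpr (Fin.val_ne_zero_iff.mpr this), Nat.lt_succ_iff.mp x.isLt⟩

/-- a function `f : [n] → [m]` is quasi-monotonic iff it factors as
`f = d_α ∘ u_β` with `u_β : [n] → [j]` and `d_α : [j] → [m]` for some
`0 ≤ j ≤ min n m`, where `β` is a multi-index of dimension `≤ n` with `|β| = n - j`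
and `α` is a multi-index of dimension `≤ m` with `|α| = m - j`. -/
theorem quasiMonotonic_iff_factorization (n m : ℕ) (f : Fin (n + 1) → Fin (m + 1)) :
    QuasiMonotonic f ↔
      ∃ (j : ℕ) (hjn : j ≤ n) (hjm : j ≤ m) (β α : List ℕ)
        (hβl : β.length ≤ n) (hαl : α.length ≤ m),
        IsMultiIndex n β ∧ IsMultiIndex m α ∧
          ∃ (hβk : β.length = n - j) (hαk : α.length = m - j),
            ∀ x : Fin (n + 1),
              f x = dComp m α hαl (Fin.cast (by omega) (uComp n β hβl x)) := by
  constructor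
  · intro hf
    have hZn := card_erase_zeros_add hf.1
    have hAm := hf.card_compl_image_add
    set Z : Finset (Fin (n + 1)) := ({x | f x = 0} : Finset _).erase 0
    set A : Finset (Fin (m + 1)) := (univ.image f)ᶜ
    have hZ : IsMultiIndex n (sortedVals Z) := isMultiIndex_sortedVals (notMem_erase 0 _)
    have hA : IsMultiIndex m (sortedVals A) :=
      isMultiIndex_sortedVals (by simpa [A] using ⟨0, hf.1⟩)
    refine ⟨#{x | f x ≠ 0}, by omega, by omega, sortedVals Z, sortedVals A, hZ.length_le,
      hA.length_le, hZ, hA, by rw [length_sortedVals]; omega,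
      by rw [length_sortedVals]; omega, fun x => congrFun (hf.eq_of_range_eq
        (dComp_cast_uComp_quasiMonotonic hZ hA _ _ _) (fun x => ?_) (Set.ext fun y => ?_)) x⟩
    · rw [dComp_cast_uComp_eq_zero_iff hZ hA, val_mem_sortedVals]
      by_cases hx : x = 0 <;> simp [Z, hx, hf.1]
    · rw [mem_range_dComp_cast_uComp_iff hZ hA, val_mem_sortedVals]
      simp [A]
  · rintro ⟨j, hjn, hjm, β, α, hβl, hαl, hβ, hα, hβk, hαk, hf⟩
    obtain rfl : f = _ := funext hf
    exact dComp_cast_uComp_quasiMonotonic hβ hα hβl hαl _
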